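/- arXiv:2104.05781 — 4 statements merged into one kernel-verified Lean document; each statement's English description precedes it below -/
import Mathlib

section
/- Let K ≥ 1, Q > 0, μ ∈ [0,1]^K, and let θ_s ∈ (0,Q] be a common threshold for all arms. Set M = min(⌊Q/θ_s⌋, K) and θ̂_s = Q/M. Then θ_s and θ̂_s are allocation equivalent, i.e. the infimum over feasible allocations a ∈ A_Q of Σ_{i=1}^K μ_i·1{a_i < θ_s} equals the infimum over a ∈ A_Q of Σ_{i=1}^K μ_i·1{a_i < θ̂_s}. Moreover θ̂_s belongs to the finite set Θ = {Q/K, Q/(K−1), …, Q/1}. -/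
open Finset

lemma lossSet_eq (K : ℕ) (Q : ℝ) (hQ : 0 < Q) (μ : Fin K → ℝ)
    (θ : ℝ) (h0 : 0 < θ) (hQθ : θ ≤ Q) :
    {x : ℝ | ∃ a : Fin K → ℝ,
        ((∀ i, 0 ≤ a i ∧ a i ≤ Q) ∧ ∑ i, a i ≤ Q) ∧
        x = ∑ i, (if a i < θ then μ i else 0)} =
    {x : ℝ | ∃ S : Finset (Fin K), S.card ≤ min (Nat.floor (Q / θ)) K ∧
        x = ∑ i, (if i ∈ S then 0 else μ i)} := by
  ext x
  constructor
  · rintro ⟨a, ⟨⟨hab, hsum⟩, rfl⟩⟩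
    refine ⟨univ.filter (fun i => θ ≤ a i), ?_, ?_⟩
    · refine le_min ?_ (le_trans (card_filter_le _ _) (by simp))
      apply Nat.le_floor
      rw [le_div_iff₀ h0]
      calc ((univ.filter (fun i => θ ≤ a i)).card : ℝ) * θ
          = ∑ i ∈ univ.filter (fun i => θ ≤ a i), θ := by
            rw [Finset.sum_const, nsmul_eq_mul]
        _ ≤ ∑ i ∈ univ.filter (fun i => θ ≤ a i), a i := by
            apply Finset.sum_le_sum; intro i hi; exact (mem_filter.mp hi).2
        _ ≤ ∑ i, a i := by
            apply Finset.sum_le_sum_of_subset_of_nonneg (filter_subset _ _)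
            intro i _ _; exact (hab i).1
        _ ≤ Q := hsum
    · apply Finset.sum_congr rfl
      intro i _
      simp only [mem_filter, mem_univ, true_and]
      by_cases h : θ ≤ a i
      · simp [h, not_lt.mpr h]
      · simp [h, not_le.mp h]
  · rintro ⟨S, hS, rfl⟩
    refine ⟨fun i => if i ∈ S then θ else 0, ⟨⟨fun i => ?_, ?_⟩, ?_⟩⟩
    · by_cases h : i ∈ S <;> simp [h, le_of_lt h0, hQ.le, hQθ]
    · calc ∑ i, (if i ∈ S then θ else 0) = S.card * θ := by
            rw [Finset.sum_ite_mem, univ_inter, Finset.sum_const, nsmul_eq_mul]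
        _ ≤ (Nat.floor (Q / θ) : ℝ) * θ := by
            apply mul_le_mul_of_nonneg_right _ h0.le
            exact_mod_cast le_trans hS (min_le_left _ _)
        _ ≤ (Q / θ) * θ := by
            apply mul_le_mul_of_nonneg_right _ h0.le
            exact Nat.floor_le (by positivity)
        _ = Q := div_mul_cancel₀ _ (ne_of_gt h0)
    · apply Finset.sum_congr rfl
      intro i _
      by_cases h : i ∈ S <;> simp [h, h0, lt_irrefl]

/-- For a common threshold θ_s ∈ (0,Q], setting M = min(⌊Q/θ_s⌋, K) and
θ̂_s = Q/M, the threshold θ̂_s is allocation equivalent to θ_s (same infimum of loss over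
feasible allocations), and θ̂_s lies in the finite set {Q/K, …, Q/1}. -/
theorem stmt_0 (K : ℕ) (hK : 1 ≤ K) (Q : ℝ) (hQ : 0 < Q)
    (μ : Fin K → ℝ) (hμ : ∀ i, 0 ≤ μ i ∧ μ i ≤ 1)
    (θs : ℝ) (hθ0 : 0 < θs) (hθQ : θs ≤ Q)
    (M : ℕ) (hM : M = min (Nat.floor (Q / θs)) K)
    (θhat : ℝ) (hθhat : θhat = Q / M) :
    sInf {x : ℝ | ∃ a : Fin K → ℝ,
        ((∀ i, 0 ≤ a i ∧ a i ≤ Q) ∧ ∑ i, a i ≤ Q) ∧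
        x = ∑ i, (if a i < θs then μ i else 0)} =
      sInf {x : ℝ | ∃ a : Fin K → ℝ,
        ((∀ i, 0 ≤ a i ∧ a i ≤ Q) ∧ ∑ i, a i ≤ Q) ∧
        x = ∑ i, (if a i < θhat then μ i else 0)} ∧
    ∃ m : ℕ, 1 ≤ m ∧ m ≤ K ∧ θhat = Q / m := by
  have hfloor1 : 1 ≤ Nat.floor (Q / θs) := by
    apply Nat.le_floor
    rw [Nat.cast_one, le_div_iff₀ hθ0]; linarith
  have hM1 : 1 ≤ M := by rw [hM]; exact le_min hfloor1 hK
  have hMK : M ≤ K := by rw [hM]; exact min_le_right _ _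
  have hMpos : (0:ℝ) < M := by exact_mod_cast hM1
  have hθhat0 : 0 < θhat := by rw [hθhat]; positivity
  have hθhatQ : θhat ≤ Q := by
    rw [hθhat, div_le_iff₀ hMpos]
    have h1 : (1:ℝ) ≤ M := by exact_mod_cast hM1
    nlinarith
  have hfloorhat : Nat.floor (Q / θhat) = M := by
    have : Q / θhat = (M:ℝ) := by rw [hθhat]; field_simp
    rw [this, Nat.floor_natCast]
  constructor
  · rw [lossSet_eq K Q hQ μ θs hθ0 hθQ, lossSet_eq K Q hQ μ θhat hθhat0 hθhatQ,
      hfloorhat, ← hM, min_eq_left hMK]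
  · exact ⟨M, hM1, hMK, hθhat⟩
end

section
/- Let K ≥ 1, Q > 0, μ ∈ [0,1]^K, and θ ∈ (0,Q]^K. Then the infimum over feasible allocations a ∈ A_Q of the loss Σ_{i=1}^K μ_i·1{a_i < θ_i} equals Σ_{i=1}^K μ_i − V(μ,θ,Q), where V(μ,θ,Q) is the 0-1 knapsack value; in particular, an allocation minimizes the loss if and only if the set {i : a_i ≥ θ_i} it covers attains the knapsack value, i.e., the optimal allocation is obtained by solving the 0-1 knapsack problem KP(μ,θ,Q). -/
open Finset

/-- The infimum of the loss Σ μ_i·1{a_i < θ_i} over feasible allocations equals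
Σ μ_i − V(μ,θ,Q); moreover a feasible allocation minimizes the loss iff the set
{i : a_i ≥ θ_i} it covers attains the knapsack value. -/
theorem stmt_5 (K : ℕ) (hK : 1 ≤ K) (Q : ℝ) (hQ : 0 < Q)
    (μ θ : Fin K → ℝ) (hμ : ∀ i, 0 ≤ μ i ∧ μ i ≤ 1)
    (hθ : ∀ i, 0 < θ i ∧ θ i ≤ Q)
    (V : ℝ)
    (hV : V = sSup {v : ℝ | ∃ S : Finset (Fin K),
        ∑ i ∈ S, θ i ≤ Q ∧ v = ∑ i ∈ S, μ i}) :
    sInf {x : ℝ | ∃ a : Fin K → ℝ,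
        ((∀ i, 0 ≤ a i ∧ a i ≤ Q) ∧ ∑ i, a i ≤ Q) ∧
        x = ∑ i, (if a i < θ i then μ i else 0)} = (∑ i, μ i) - V ∧
    ∀ a : Fin K → ℝ, ((∀ i, 0 ≤ a i ∧ a i ≤ Q) ∧ ∑ i, a i ≤ Q) →
      ((∀ b : Fin K → ℝ, ((∀ i, 0 ≤ b i ∧ b i ≤ Q) ∧ ∑ i, b i ≤ Q) →
          ∑ i, (if a i < θ i then μ i else 0) ≤ ∑ i, (if b i < θ i then μ i else 0)) ↔
        ∑ i ∈ univ.filter (fun i : Fin K => θ i ≤ a i), μ i = V) := by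
  have hQ0 : 0 ≤ Q := hQ.le
  -- loss formula
  have loss_eq : ∀ a : Fin K → ℝ,
      ∑ i, (if a i < θ i then μ i else 0)
        = (∑ i, μ i) - ∑ i ∈ univ.filter (fun i : Fin K => θ i ≤ a i), μ i := by
    intro a
    rw [Finset.sum_filter, ← Finset.sum_sub_distrib]
    apply Finset.sum_congr rfl
    intro i _
    by_cases h : a i < θ i
    · simp [h, not_le.mpr h]
    · simp [h, not_lt.mp h]
  -- covered set is knapsack feasible
  have Tfeas : ∀ a : Fin K → ℝ, ((∀ i, 0 ≤ a i ∧ a i ≤ Q) ∧ ∑ i, a i ≤ Q) →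
      ∑ i ∈ univ.filter (fun i : Fin K => θ i ≤ a i), θ i ≤ Q := by
    rintro a ⟨h1, h2⟩
    calc ∑ i ∈ univ.filter (fun i : Fin K => θ i ≤ a i), θ i
        ≤ ∑ i ∈ univ.filter (fun i : Fin K => θ i ≤ a i), a i :=
          Finset.sum_le_sum (fun i hi => (Finset.mem_filter.mp hi).2)
      _ ≤ ∑ i, a i := Finset.sum_le_sum_of_subset_of_nonneg (Finset.filter_subset _ _)
          (fun i _ _ => (h1 i).1)
      _ ≤ Q := h2
  set KS := {v : ℝ | ∃ S : Finset (Fin K), ∑ i ∈ S, θ i ≤ Q ∧ v = ∑ i ∈ S, μ i} with hKS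
  have hKSfin : KS.Finite := by
    have hsub : KS ⊆ (fun S : Finset (Fin K) => ∑ i ∈ S, μ i) '' Set.univ := by
      rintro v ⟨S, _, rfl⟩; exact ⟨S, trivial, rfl⟩
    exact Set.Finite.subset (Set.finite_univ.image _) hsub
  have hKSne : KS.Nonempty := ⟨0, ∅, by simp [hQ0], by simp⟩
  have hVmem : V ∈ KS := hV ▸ hKSne.csSup_mem hKSfin
  have hVub : ∀ v ∈ KS, v ≤ V := fun v hv => hV ▸ le_csSup hKSfin.bddAbove hv
  obtain ⟨S₀, hS₀Q, hS₀V⟩ := hVmem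
  -- allocation from a knapsack-feasible set
  have alloc : ∀ S : Finset (Fin K), ∑ i ∈ S, θ i ≤ Q →
      ∃ a : Fin K → ℝ, ((∀ i, 0 ≤ a i ∧ a i ≤ Q) ∧ ∑ i, a i ≤ Q) ∧
        ∑ i, (if a i < θ i then μ i else 0) = (∑ i, μ i) - ∑ i ∈ S, μ i := by
    intro S hS
    refine ⟨fun i => if i ∈ S then θ i else 0, ⟨fun i => ?_, ?_⟩, ?_⟩
    · by_cases h : i ∈ S <;> simp [h, (hθ i).1.le, (hθ i).2, hQ0]
    · calc ∑ i, (if i ∈ S then θ i else 0) = ∑ i ∈ S, θ i := by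
            rw [Finset.sum_ite_mem, Finset.univ_inter]
        _ ≤ Q := hS
    · rw [loss_eq]
      congr 1
      apply Finset.sum_congr _ (fun _ _ => rfl)
      ext i
      simp only [Finset.mem_filter, Finset.mem_univ, true_and]
      by_cases h : i ∈ S
      · simp [h]
      · simp [h, not_le.mpr (hθ i).1]
  obtain ⟨a₀, ha₀f, ha₀loss⟩ := alloc S₀ hS₀Q
  set L := {x : ℝ | ∃ a : Fin K → ℝ,
      ((∀ i, 0 ≤ a i ∧ a i ≤ Q) ∧ ∑ i, a i ≤ Q) ∧
      x = ∑ i, (if a i < θ i then μ i else 0)} with hL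
  have hmem : (∑ i, μ i) - V ∈ L := ⟨a₀, ha₀f, by rw [ha₀loss, hS₀V]⟩
  have hlb : ∀ x ∈ L, (∑ i, μ i) - V ≤ x := by
    rintro x ⟨a, haf, rfl⟩
    rw [loss_eq]
    have : ∑ i ∈ univ.filter (fun i : Fin K => θ i ≤ a i), μ i ≤ V :=
      hVub _ ⟨_, Tfeas a haf, rfl⟩
    linarith
  constructor
  · exact le_antisymm (csInf_le ⟨_, hlb⟩ hmem) (le_csInf ⟨_, hmem⟩ hlb)
  · intro a haf
    have hTa : ∑ i ∈ univ.filter (fun i : Fin K => θ i ≤ a i), μ i ≤ V :=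
      hVub _ ⟨_, Tfeas a haf, rfl⟩
    constructor
    · intro hmin
      have h1 := hmin a₀ ha₀f
      rw [ha₀loss, ← hS₀V, loss_eq a] at h1
      linarith
    · intro heq b hbf
      have hTb : ∑ i ∈ univ.filter (fun i : Fin K => θ i ≤ b i), μ i ≤ V :=
        hVub _ ⟨_, Tfeas b hbf, rfl⟩
      rw [loss_eq a, loss_eq b, heq]
      linarith
end

section
/- Let K ≥ 1, Q > 0, μ ∈ [0,1]^K, θ ∈ (0,Q]^K, and let S* ⊆ {1,…,K} be a subset attaining the knapsack value V(μ,θ,Q). Let r = Q − Σ_{i∈S*} θ_i and γ = r/K, and assume γ > 0. If θ̂ ∈ ℝ^K satisfies θ_i ≤ θ̂_i ≤ ⌈θ_i/γ⌉·γ for every i, then θ̂ is allocation equivalent of θ; equivalently, V(μ,θ̂,Q) = V(μ,θ,Q). -/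
open Finset

/-- If S* attains the knapsack value V(μ,θ,Q), r = Q − Σ_{i∈S*} θ_i, γ = r/K > 0,
and θ̂ satisfies θ_i ≤ θ̂_i ≤ ⌈θ_i/γ⌉·γ for every i, then θ̂ is allocation equivalent of θ:
V(μ,θ̂,Q) = V(μ,θ,Q). -/
theorem stmt_6 (K : ℕ) (hK : 1 ≤ K) (Q : ℝ) (hQ : 0 < Q)
    (μ θ : Fin K → ℝ) (hμ : ∀ i, 0 ≤ μ i ∧ μ i ≤ 1)
    (hθ : ∀ i, 0 < θ i ∧ θ i ≤ Q)
    (V : ℝ)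
    (hV : V = sSup {v : ℝ | ∃ S : Finset (Fin K),
        ∑ i ∈ S, θ i ≤ Q ∧ v = ∑ i ∈ S, μ i})
    (Sstar : Finset (Fin K))
    (hfeas : ∑ i ∈ Sstar, θ i ≤ Q) (hopt : ∑ i ∈ Sstar, μ i = V)
    (r γ : ℝ) (hr : r = Q - ∑ i ∈ Sstar, θ i) (hγdef : γ = r / K) (hγ : 0 < γ)
    (θhat : Fin K → ℝ)
    (hθhat : ∀ i, θ i ≤ θhat i ∧ θhat i ≤ (⌈θ i / γ⌉ : ℝ) * γ) :
    sSup {v : ℝ | ∃ S : Finset (Fin K),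
        ∑ i ∈ S, θhat i ≤ Q ∧ v = ∑ i ∈ S, μ i} = V := by
  have hKpos : (0:ℝ) < (K:ℝ) := by exact_mod_cast hK
  have hγne : γ ≠ 0 := ne_of_gt hγ
  have hbddA : BddAbove {v : ℝ | ∃ S : Finset (Fin K),
      ∑ i ∈ S, θ i ≤ Q ∧ v = ∑ i ∈ S, μ i} := by
    refine ⟨∑ i, μ i, ?_⟩
    rintro v ⟨S, -, rfl⟩
    exact Finset.sum_le_sum_of_subset_of_nonneg (Finset.subset_univ S)
      (fun i _ _ => (hμ i).1)
  have hbddB : BddAbove {v : ℝ | ∃ S : Finset (Fin K),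
      ∑ i ∈ S, θhat i ≤ Q ∧ v = ∑ i ∈ S, μ i} := by
    refine ⟨∑ i, μ i, ?_⟩
    rintro v ⟨S, -, rfl⟩
    exact Finset.sum_le_sum_of_subset_of_nonneg (Finset.subset_univ S)
      (fun i _ _ => (hμ i).1)
  -- S* is feasible for θhat
  have hfeasB : ∑ i ∈ Sstar, θhat i ≤ Q := by
    have h1 : ∑ i ∈ Sstar, θhat i ≤ ∑ i ∈ Sstar, (θ i + γ) := by
      refine Finset.sum_le_sum (fun i _ => ?_)
      have h2 : (⌈θ i / γ⌉ : ℝ) ≤ θ i / γ + 1 := le_of_lt (Int.ceil_lt_add_one _)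
      have h3 : (⌈θ i / γ⌉ : ℝ) * γ ≤ (θ i / γ + 1) * γ :=
        mul_le_mul_of_nonneg_right h2 (le_of_lt hγ)
      have h4 : (θ i / γ + 1) * γ = θ i + γ := by
        field_simp
      linarith [(hθhat i).2]
    have h5 : ∑ i ∈ Sstar, (θ i + γ) = ∑ i ∈ Sstar, θ i + Sstar.card * γ := by
      rw [Finset.sum_add_distrib, Finset.sum_const, nsmul_eq_mul]
    have hcard : (Sstar.card : ℝ) ≤ (K : ℝ) := by
      have := Finset.card_le_card (Finset.subset_univ Sstar)
      simp only [Finset.card_univ, Fintype.card_fin] at this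
      exact_mod_cast this
    have h6 : (Sstar.card : ℝ) * γ ≤ (K : ℝ) * γ :=
      mul_le_mul_of_nonneg_right hcard (le_of_lt hγ)
    have h7 : (K : ℝ) * γ = r := by
      rw [hγdef]; field_simp
    linarith
  have hVB : V ∈ {v : ℝ | ∃ S : Finset (Fin K),
      ∑ i ∈ S, θhat i ≤ Q ∧ v = ∑ i ∈ S, μ i} := ⟨Sstar, hfeasB, hopt.symm⟩
  refine le_antisymm ?_ (le_csSup hbddB hVB)
  refine csSup_le ⟨V, hVB⟩ ?_
  rintro v ⟨S, hS, rfl⟩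
  have hSθ : ∑ i ∈ S, θ i ≤ Q := by
    refine le_trans (Finset.sum_le_sum (fun i _ => (hθhat i).1)) hS
  rw [hV]
  exact le_csSup hbddA ⟨S, hSθ, rfl⟩
end

section
/- Let K ≥ 1, Q > 0, μ ∈ [0,1]^K, θ ∈ (0,Q]^K, and let S* ⊆ {1,…,K} attain the knapsack value V(μ,θ,Q). Let r = Q − Σ_{i∈S*} θ_i, γ = r/K, and assume γ > 0. If θ̂ satisfies θ_i ≤ θ̂_i ≤ ⌈θ_i/γ⌉·γ for all i, then S* is also an optimal solution of the knapsack problem KP(μ,θ̂,Q): S* is feasible under θ̂ and Σ_{i∈S*} μ_i = V(μ,θ̂,Q). -/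
open Finset

/-- If S* attains V(μ,θ,Q), r = Q − Σ_{i∈S*} θ_i, γ = r/K > 0, and
θ_i ≤ θ̂_i ≤ ⌈θ_i/γ⌉·γ for all i, then S* is also optimal for KP(μ,θ̂,Q): it is feasible
under θ̂ and its value equals V(μ,θ̂,Q). -/
theorem stmt_9 (K : ℕ) (hK : 1 ≤ K) (Q : ℝ) (hQ : 0 < Q)
    (μ θ : Fin K → ℝ) (hμ : ∀ i, 0 ≤ μ i ∧ μ i ≤ 1)
    (hθ : ∀ i, 0 < θ i ∧ θ i ≤ Q)
    (V : ℝ)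
    (hV : V = sSup {v : ℝ | ∃ S : Finset (Fin K),
        ∑ i ∈ S, θ i ≤ Q ∧ v = ∑ i ∈ S, μ i})
    (Sstar : Finset (Fin K))
    (hfeas : ∑ i ∈ Sstar, θ i ≤ Q) (hopt : ∑ i ∈ Sstar, μ i = V)
    (r γ : ℝ) (hr : r = Q - ∑ i ∈ Sstar, θ i) (hγdef : γ = r / K) (hγ : 0 < γ)
    (θhat : Fin K → ℝ)
    (hθhat : ∀ i, θ i ≤ θhat i ∧ θhat i ≤ (⌈θ i / γ⌉ : ℝ) * γ) :
    ∑ i ∈ Sstar, θhat i ≤ Q ∧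
    ∑ i ∈ Sstar, μ i = sSup {v : ℝ | ∃ S : Finset (Fin K),
        ∑ i ∈ S, θhat i ≤ Q ∧ v = ∑ i ∈ S, μ i} := by
  have hKγ : (K : ℝ) * γ = r := by
    rw [hγdef]
    field_simp
  have hbound : ∀ i, θhat i ≤ θ i + γ := by
    intro i
    have h2 := (hθhat i).2
    have hceil : (⌈θ i / γ⌉ : ℝ) ≤ θ i / γ + 1 := le_of_lt (Int.ceil_lt_add_one _)
    calc θhat i ≤ (⌈θ i / γ⌉ : ℝ) * γ := h2
      _ ≤ (θ i / γ + 1) * γ := by nlinarith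
      _ = θ i + γ := by field_simp
  have hcard : (Sstar.card : ℝ) ≤ K := by
    have := Finset.card_le_card (Finset.subset_univ Sstar)
    simp at this
    exact_mod_cast this
  have hfeashat : ∑ i ∈ Sstar, θhat i ≤ Q := by
    have h1 : ∑ i ∈ Sstar, θhat i ≤ ∑ i ∈ Sstar, (θ i + γ) :=
      Finset.sum_le_sum fun i _ => hbound i
    rw [Finset.sum_add_distrib, Finset.sum_const, nsmul_eq_mul] at h1
    have h2 : (Sstar.card : ℝ) * γ ≤ (K : ℝ) * γ := by nlinarith
    nlinarith
  refine ⟨hfeashat, ?_⟩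
  have hbdd : BddAbove {v : ℝ | ∃ S : Finset (Fin K),
      ∑ i ∈ S, θ i ≤ Q ∧ v = ∑ i ∈ S, μ i} := by
    refine ⟨(K : ℝ), fun v hv => ?_⟩
    obtain ⟨S, _, rfl⟩ := hv
    calc ∑ i ∈ S, μ i ≤ ∑ i ∈ S, 1 := Finset.sum_le_sum fun i _ => (hμ i).2
      _ = (S.card : ℝ) := by simp
      _ ≤ K := by
        have := Finset.card_le_card (Finset.subset_univ S)
        simp at this
        exact_mod_cast this
  apply le_antisymm
  · exact le_csSup (hbdd.mono fun v hv => by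
      obtain ⟨S, hS, rfl⟩ := hv
      exact ⟨S, le_trans (Finset.sum_le_sum fun i _ => (hθhat i).1) hS, rfl⟩)
      ⟨Sstar, hfeashat, rfl⟩
  · have hne : ({v : ℝ | ∃ S : Finset (Fin K),
        ∑ i ∈ S, θhat i ≤ Q ∧ v = ∑ i ∈ S, μ i}).Nonempty :=
      ⟨0, ∅, by simp [le_of_lt hQ]⟩
    apply csSup_le hne
    intro v hv
    obtain ⟨S, hS, rfl⟩ := hv
    have hmem : (∑ i ∈ S, μ i) ∈ {v : ℝ | ∃ S : Finset (Fin K),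
        ∑ i ∈ S, θ i ≤ Q ∧ v = ∑ i ∈ S, μ i} :=
      ⟨S, le_trans (Finset.sum_le_sum fun i _ => (hθhat i).1) hS, rfl⟩
    calc ∑ i ∈ S, μ i ≤ V := hV ▸ le_csSup hbdd hmem
      _ = ∑ i ∈ Sstar, μ i := hopt.symm
end
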